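/- Gradient norm controlled by the stationarity measure: Let E be a finite-dimensional real inner product space, X ⊆ E, and let h satisfy the mirror hypotheses on X with Hessian bounds 0 < μ_X ≤ 𝓛_X. Let f : E → ℝ be differentiable, c > 0, and suppose x ∈ X and x̂ ∈ X satisfy ∇h(x̂) = ∇h(x) − c·∇f(x). Then ‖∇f(x)‖² ≤ 2·𝓛_X·D_h(x, x̂)/c²; equivalently, with 𝒢 := D_h(x, x̂)/c² and κ := 𝓛_X/μ_X, one has ‖∇f(x)‖²/μ_X ≤ 2κ·𝒢. -/

import Mathlib

/-!
Join `xhat` to `x` inside `X` by the curve `γ t = gstar (∇h xhat + t • v)` with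
`v = ∇h x - ∇h xhat`. Along `γ` the derivative of `h - ⟪∇h xhat, ·⟫` is `t ⟪v, γ'⟫`, and since
`∇²h (γ t) γ' = v` with `0 ≤ ∇²h ≤ 𝓛X`, Cauchy–Schwarz for the positive operator `∇²h` gives
`‖v‖² ≤ 𝓛X ⟪v, γ'⟫`. Integrating over `[0, 1]` yields `‖∇h x - ∇h xhat‖² ≤ 2 𝓛X D_h(x, xhat)`, and
the proximal equation turns the left side into `c² ‖∇f x‖²`.
-/

open RealInnerProductSpace

/-- The mirror hypotheses for a kernel `h` with gradient `h'` and Hessian `h''`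
on a set `X`: `h` is twice continuously differentiable on an open set containing `X`,
the image `h' '' X` is convex, and there is a continuously differentiable local inverse
`gstar` of the mirror map `h'`, defined on an open set containing `h' '' X`, mapping the
convex hull of `h' '' X` into `X`. -/
structure MirrorHyp {E : Type*} [NormedAddCommGroup E] [InnerProductSpace ℝ E]
    [CompleteSpace E] (h : E → ℝ) (h' : E → E) (h'' : E → E →L[ℝ] E) (X : Set E) where
  U : Set E
  isOpen_U : IsOpen U
  subset_U : X ⊆ U
  grad : ∀ x ∈ U, HasGradientAt h (h' x) x
  hess : ∀ x ∈ U, HasFDerivAt h' (h'' x) x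
  hess_cont : ContinuousOn h'' U
  img_convex : Convex ℝ (h' '' X)
  gstar : E → E
  V : Set E
  isOpen_V : IsOpen V
  img_subset_V : h' '' X ⊆ V
  gstar_contDiff : ContDiffOn ℝ 1 gstar V
  gstar_rightInv : ∀ w ∈ V, h' (gstar w) = w
  gstar_leftInv : ∀ x ∈ X, gstar (h' x) = x
  gstar_maps : ∀ w ∈ convexHull ℝ (h' '' X), gstar w ∈ X

open Topology

namespace ContinuousLinearMap.IsPositive

variable {E : Type*} [NormedAddCommGroup E] [InnerProductSpace ℝ E] {H : E →L[ℝ] E}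

theorem inner_apply_sq_le (hH : H.IsPositive) (u w : E) :
    ⟪H u, w⟫ ^ 2 ≤ ⟪H u, u⟫ * ⟪H w, w⟫ := by
  have hsymm : ⟪H w, u⟫ = ⟪H u, w⟫ := (hH.isSymmetric w u).trans (real_inner_comm _ _)
  have hquad : ∀ t : ℝ, 0 ≤ ⟪H w, w⟫ * (t * t) + 2 * ⟪H u, w⟫ * t + ⟪H u, u⟫ := by
    intro t
    have := hH.inner_nonneg_left (u + t • w)
    simp only [map_add, map_smul, inner_add_left, inner_add_right, real_inner_smul_left,
      real_inner_smul_right, hsymm] at this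
    linarith
  have := discrim_le_zero hquad
  rw [discrim] at this
  linarith

theorem norm_apply_sq_le_mul_inner (hH : H.IsPositive) {L : ℝ}
    (hL : ∀ a, ⟪H a, a⟫ ≤ L * ‖a‖ ^ 2) (u : E) :
    ‖H u‖ ^ 2 ≤ L * ⟪H u, u⟫ := by
  rcases eq_or_ne (H u) 0 with hu | hu
  · simp [hu]
  have hcs := hH.inner_apply_sq_le u (H u)
  rw [real_inner_self_eq_norm_sq] at hcs
  have hpos : 0 < ‖H u‖ ^ 2 := by positivity
  nlinarith [hL (H u), hH.inner_nonneg_left u]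

end ContinuousLinearMap.IsPositive

theorem isSymmetric_of_hasGradientAt_of_hasFDerivAt {E : Type*} [NormedAddCommGroup E]
    [InnerProductSpace ℝ E] [CompleteSpace E] {f : E → ℝ} {f' : E → E} {f'' : E →L[ℝ] E} {x : E}
    (hf : ∀ᶠ y in 𝓝 x, HasGradientAt f (f' y) y) (hx : HasFDerivAt f' f'' x) :
    (f'' : E →ₗ[ℝ] E).IsSymmetric := by
  intro a b
  -- over `ℝ`, `innerSL ℝ` is linear and `toDual ℝ E y` is definitionally `innerSL ℝ y`
  have := second_derivative_symmetric_of_eventually (f' := fun y => innerSL ℝ (f' y))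
    (hf.mono fun y hy => hy.hasFDerivAt)
    ((innerSL ℝ : E →L[ℝ] E →L[ℝ] ℝ).hasFDerivAt.comp x hx) a b
  exact this.trans (real_inner_comm _ _)

theorem div_two_le_sub_of_mul_le_hasDerivAt {φ φ' : ℝ → ℝ} {a : ℝ}
    (hφ : ∀ t ∈ Set.Icc (0 : ℝ) 1, HasDerivAt φ (φ' t) t)
    (ha : ∀ t ∈ Set.Icc (0 : ℝ) 1, a * t ≤ φ' t) :
    a / 2 ≤ φ 1 - φ 0 := by
  let χ : ℝ → ℝ := fun t => φ t - a / 2 * t ^ 2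
  have hχ : ∀ t ∈ Set.Icc (0 : ℝ) 1, HasDerivAt χ (φ' t - a * t) t := fun t ht =>
    ((hφ t ht).sub ((hasDerivAt_pow 2 t).const_mul (a / 2))).congr_deriv (by ring)
  have hmono : MonotoneOn χ (Set.Icc 0 1) := by
    refine monotoneOn_of_hasDerivWithinAt_nonneg (f' := fun t => φ' t - a * t) (convex_Icc 0 1)
      (fun t ht => (hχ t ht).continuousAt.continuousWithinAt) (fun t ht => ?_) (fun t ht => ?_)
    · exact (hχ t (interior_subset ht)).hasDerivWithinAt
    · exact sub_nonneg.2 (ha t (interior_subset ht))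
  have := hmono (Set.left_mem_Icc.2 zero_le_one) (Set.right_mem_Icc.2 zero_le_one) zero_le_one
  simp only [χ] at this
  linarith

def bregman {E : Type*} [NormedAddCommGroup E] [InnerProductSpace ℝ E] (h : E → ℝ) (h' : E → E)
    (x y : E) : ℝ :=
  h x - h y - ⟪h' y, x - y⟫

namespace MirrorHyp

variable {E : Type*} [NormedAddCommGroup E] [InnerProductSpace ℝ E] [CompleteSpace E]
  {h : E → ℝ} {h' : E → E} {h'' : E → E →L[ℝ] E} {X : Set E} (mh : MirrorHyp h h' h'' X)

theorem hessian_isSymmetric {y : E} (hy : y ∈ mh.U) : (h'' y : E →ₗ[ℝ] E).IsSymmetric :=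
  isSymmetric_of_hasGradientAt_of_hasFDerivAt
    (mh.isOpen_U.eventually_mem hy |>.mono mh.grad) (mh.hess y hy)

theorem hasFDerivAt_gstar {w : E} (hw : w ∈ mh.V) :
    HasFDerivAt mh.gstar (fderiv ℝ mh.gstar w) w :=
  ((mh.gstar_contDiff.contDiffAt (mh.isOpen_V.mem_nhds hw)).differentiableAt
    one_ne_zero).hasFDerivAt

theorem hessian_comp_fderiv_gstar {w : E} (hw : w ∈ mh.V) (hU : mh.gstar w ∈ mh.U) :
    h'' (mh.gstar w) ∘L fderiv ℝ mh.gstar w = ContinuousLinearMap.id ℝ E := by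
  have hcomp := (mh.hess _ hU).comp w (mh.hasFDerivAt_gstar hw)
  refine (hcomp.congr_of_eventuallyEq ?_).unique (hasFDerivAt_id w)
  filter_upwards [mh.isOpen_V.eventually_mem hw] with w' hw'
  exact (mh.gstar_rightInv w' hw').symm

theorem norm_sq_le_mul_inner_fderiv_gstar {L : ℝ}
    (hpos : ∀ y ∈ X, ∀ v, 0 ≤ ⟪h'' y v, v⟫) (hL : ∀ y ∈ X, ∀ v, ⟪h'' y v, v⟫ ≤ L * ‖v‖ ^ 2)
    {w : E} (hw : w ∈ h' '' X) (v : E) :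
    ‖v‖ ^ 2 ≤ L * ⟪v, fderiv ℝ mh.gstar w v⟫ := by
  have hX : mh.gstar w ∈ X := mh.gstar_maps w (subset_convexHull ℝ _ hw)
  have hU : mh.gstar w ∈ mh.U := mh.subset_U hX
  have hH : (h'' (mh.gstar w)).IsPositive := ⟨mh.hessian_isSymmetric hU, hpos _ hX⟩
  have hinv : h'' (mh.gstar w) (fderiv ℝ mh.gstar w v) = v := by
    simpa using congr($(mh.hessian_comp_fderiv_gstar (mh.img_subset_V hw) hU) v)
  simpa only [hinv] using hH.norm_apply_sq_le_mul_inner (hL _ hX) (fderiv ℝ mh.gstar w v)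

theorem hasDerivAt_along_dual_line (w₀ v : E) {t : ℝ} (hV : w₀ + t • v ∈ mh.V)
    (hU : mh.gstar (w₀ + t • v) ∈ mh.U) :
    HasDerivAt (fun s : ℝ => h (mh.gstar (w₀ + s • v)) - ⟪w₀, mh.gstar (w₀ + s • v)⟫)
      (t * ⟪v, fderiv ℝ mh.gstar (w₀ + t • v) v⟫) t := by
  have hline : HasDerivAt (fun s : ℝ => w₀ + s • v) v t := by
    simpa using ((hasDerivAt_id t).smul_const v).const_add w₀
  have hγ := (mh.hasFDerivAt_gstar hV).comp_hasDerivAt t hline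
  have hh := (mh.grad _ hU).hasFDerivAt.comp_hasDerivAt t hγ
  have hinner := (hasDerivAt_const t w₀).inner ℝ hγ
  refine (hh.sub hinner).congr_deriv ?_
  simp only [Function.comp_apply, InnerProductSpace.toDual_apply_apply, mh.gstar_rightInv _ hV,
    inner_zero_left, inner_add_left, real_inner_smul_left]
  ring

include mh in
theorem norm_sub_sq_le_two_mul_bregman {L : ℝ}
    (hpos : ∀ y ∈ X, ∀ v, 0 ≤ ⟪h'' y v, v⟫) (hL : ∀ y ∈ X, ∀ v, ⟪h'' y v, v⟫ ≤ L * ‖v‖ ^ 2)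
    {x y : E} (hx : x ∈ X) (hy : y ∈ X) :
    ‖h' x - h' y‖ ^ 2 ≤ 2 * L * bregman h h' x y := by
  set v := h' x - h' y
  have hseg : ∀ t ∈ Set.Icc (0 : ℝ) 1, h' y + t • v ∈ h' '' X := fun t ht =>
    mh.img_convex.add_smul_sub_mem ⟨y, hy, rfl⟩ ⟨x, hx, rfl⟩ ht
  have hderiv : ∀ t ∈ Set.Icc (0 : ℝ) 1, HasDerivAt
      (fun s : ℝ => L * (h (mh.gstar (h' y + s • v)) - ⟪h' y, mh.gstar (h' y + s • v)⟫))
      (L * (t * ⟪v, fderiv ℝ mh.gstar (h' y + t • v) v⟫)) t := fun t ht =>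
    (mh.hasDerivAt_along_dual_line _ v (mh.img_subset_V (hseg t ht))
      (mh.subset_U (mh.gstar_maps _ (subset_convexHull ℝ _ (hseg t ht))))).const_mul L
  have key := div_two_le_sub_of_mul_le_hasDerivAt (a := ‖v‖ ^ 2) hderiv fun t ht => by
    have := mul_le_mul_of_nonneg_left
      (mh.norm_sq_le_mul_inner_fderiv_gstar hpos hL (hseg t ht) v) ht.1
    linarith
  have h0 : mh.gstar (h' y + (0 : ℝ) • v) = y := by simpa using mh.gstar_leftInv y hy
  have h1 : mh.gstar (h' y + (1 : ℝ) • v) = x := by simpa [v] using mh.gstar_leftInv x hx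
  simp only [h0, h1] at key
  rw [bregman, inner_sub_right]
  linarith

end MirrorHyp

theorem grad_norm_le_stationarity_measure_general
    {E : Type*} [NormedAddCommGroup E] [InnerProductSpace ℝ E] [FiniteDimensional ℝ E]
    (X : Set E) (h : E → ℝ) (h' : E → E) (h'' : E → E →L[ℝ] E)
    (mh : MirrorHyp h h' h'' X)
    (μX 𝓛X : ℝ) (hμX : 0 < μX)
    (hbound : ∀ u ∈ X, ∀ v : E,
      μX * ‖v‖ ^ 2 ≤ ⟪h'' u v, v⟫ ∧ ⟪h'' u v, v⟫ ≤ 𝓛X * ‖v‖ ^ 2)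
    (f' : E → E)
    (c : ℝ) (hc : 0 < c)
    (x xhat : E) (hx : x ∈ X) (hxhat : xhat ∈ X)
    (hprox : h' xhat = h' x - c • f' x) :
    ‖f' x‖ ^ 2 ≤ 2 * 𝓛X * (h x - h xhat - ⟪h' xhat, x - xhat⟫) / c ^ 2 ∧
    ‖f' x‖ ^ 2 / μX ≤ 2 * (𝓛X / μX) * ((h x - h xhat - ⟪h' xhat, x - xhat⟫) / c ^ 2) := by
  have hpos : ∀ u ∈ X, ∀ v : E, 0 ≤ ⟪h'' u v, v⟫ := fun u hu v =>
    (by positivity : 0 ≤ μX * ‖v‖ ^ 2).trans (hbound u hu v).1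
  have hD := mh.norm_sub_sq_le_two_mul_bregman hpos (fun u hu v => (hbound u hu v).2) hx hxhat
  have hstep : h' x - h' xhat = c • f' x := by rw [hprox, sub_sub_cancel]
  rw [hstep, norm_smul, mul_pow, Real.norm_eq_abs, sq_abs] at hD
  have hmain : ‖f' x‖ ^ 2 ≤ 2 * 𝓛X * bregman h h' x xhat / c ^ 2 := by
    rw [le_div_iff₀ (by positivity)]
    linarith
  refine ⟨hmain, ?_⟩
  calc ‖f' x‖ ^ 2 / μX ≤ 2 * 𝓛X * bregman h h' x xhat / c ^ 2 / μX := by gcongr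
    _ = 2 * (𝓛X / μX) * (bregman h h' x xhat / c ^ 2) := by ring

/-- **Gradient norm controlled by the stationarity measure.** Under the mirror
hypotheses with Hessian bounds `0 < μX ≤ 𝓛X` on `X`, if `x, xhat ∈ X` satisfy the
proximal characterization `∇h xhat = ∇h x - c • ∇f x` with `c > 0`, then
`‖∇f x‖² ≤ 2 𝓛X D_h(x, xhat)/c²`; equivalently, with `𝒢 = D_h(x, xhat)/c²` and
`κ = 𝓛X/μX`, one has `‖∇f x‖²/μX ≤ 2 κ 𝒢`. -/
theorem grad_norm_le_stationarity_measure
    {E : Type*} [NormedAddCommGroup E] [InnerProductSpace ℝ E] [FiniteDimensional ℝ E]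
    (X : Set E) (h : E → ℝ) (h' : E → E) (h'' : E → E →L[ℝ] E)
    (mh : MirrorHyp h h' h'' X)
    (μX 𝓛X : ℝ) (hμX : 0 < μX) (hμ𝓛 : μX ≤ 𝓛X)
    (hbound : ∀ u ∈ X, ∀ v : E,
      μX * ‖v‖ ^ 2 ≤ ⟪h'' u v, v⟫ ∧ ⟪h'' u v, v⟫ ≤ 𝓛X * ‖v‖ ^ 2)
    (f : E → ℝ) (f' : E → E)
    (hfgrad : ∀ x : E, HasGradientAt f (f' x) x)
    (c : ℝ) (hc : 0 < c)
    (x xhat : E) (hx : x ∈ X) (hxhat : xhat ∈ X)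
    (hprox : h' xhat = h' x - c • f' x) :
    ‖f' x‖ ^ 2 ≤ 2 * 𝓛X * (h x - h xhat - ⟪h' xhat, x - xhat⟫) / c ^ 2 ∧
    ‖f' x‖ ^ 2 / μX ≤ 2 * (𝓛X / μX) * ((h x - h xhat - ⟪h' xhat, x - xhat⟫) / c ^ 2) :=
  grad_norm_le_stationarity_measure_general X h h' h'' mh μX 𝓛X hμX hbound f' c hc x xhat hx hxhat
    hprox
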